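/- Suppose the weighted gradient heat kernel bound (GLY_q) holds for some q > p: ∫ |∇_x p_t(x,y)|^q exp(γ d(x,y)²/t) dμ(x) ≤ C t^{-q/2} V(y,√t)^{1-q}, and suppose the bounded function h ≥ 0 satisfies (1/V(y,r))∫_{B(y,r)} h dμ ≤ C r^{-ε} for r > 1. Then with δ = (q-p) (appropriately normalized) there are constants C, γ' > 0 such that for t > 1: ∫ h(x)^p |∇_x p_t(x,y)|^p exp(γ' d(x,y)²/t) dμ(x) ≤ C t^{-p/2 - εδ/(2q)} V(y,√t)^{1-p}. -/

import Mathlib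

/-!
Write the integrand as `h^p · (|∇p_t|^p e^{γ' d²/t})` and apply Hölder with exponents
`q/(q-p)` and `q/p` against a Gaussian weight `w ≈ e^{-c d(x,y)²/t}`, placing `w` with the
`h`-factor and `w⁻¹` with the gradient factor. With `γ' = γp/(2q)` and `c = γp/(8(q-p))` the
Gaussian of `w⁻¹` is absorbed into that of `(GLY_q)`, which bounds the gradient factor. Since `h`
is bounded, `h^{pq/(q-p)} ≲ h`, and splitting `w` over the dyadic balls `B(y, 2^k √t)`, the
decay `(GD)` and doubling give `∫ h w ≲ t^{-ε/2} V(y,√t) ∑ₖ (2^{-ε} C_D)^k e^{-c 4^k}`, a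
convergent series because the Gaussian beats the geometric growth of the volumes.
-/

open MeasureTheory Metric Real ENNReal Filter Set Topology

theorem summable_pow_mul_exp_neg_mul_four_pow {ρ c : ℝ} (hρ : 0 < ρ) (hc : 0 < c) :
    Summable fun k : ℕ => ρ ^ k * exp (-(c * 4 ^ k)) := by
  refine summable_of_ratio_test_tendsto_lt_one zero_lt_one
    (Eventually.of_forall fun k => by positivity) ?_
  have hratio : ∀ k : ℕ, ‖ρ ^ (k + 1) * exp (-(c * 4 ^ (k + 1)))‖ / ‖ρ ^ k * exp (-(c * 4 ^ k))‖
      = ρ * exp (-(3 * c * 4 ^ k)) := fun k => by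
    have hexp : exp (-(c * 4 ^ (k + 1))) = exp (-(3 * c * 4 ^ k)) * exp (-(c * 4 ^ k)) := by
      rw [← Real.exp_add]; ring_nf
    rw [Real.norm_of_nonneg (by positivity), Real.norm_of_nonneg (by positivity),
      div_eq_iff (by positivity), hexp, pow_succ]
    ring
  simp only [hratio]
  simpa using (Real.tendsto_exp_atBot.comp (tendsto_neg_atTop_atBot.comp
    ((tendsto_pow_atTop_atTop_of_one_lt (by norm_num : (1:ℝ) < 4)).const_mul_atTop
      (by positivity : 0 < 3 * c)))).const_mul ρ

theorem tsum_pow_mul_exp_neg_mul_four_pow_pos {ρ c : ℝ} (hρ : 0 < ρ) (hc : 0 < c) :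
    0 < ∑' k : ℕ, ρ ^ k * exp (-(c * 4 ^ k)) :=
  (summable_pow_mul_exp_neg_mul_four_pow hρ hc).tsum_pos (fun _ => by positivity) 0 (by positivity)

theorem exists_lt_two_pow_four_pow_le {s : ℝ} (hs : 0 ≤ s) :
    ∃ k : ℕ, s < 2 ^ k ∧ (4:ℝ) ^ k ≤ 1 + 4 * s ^ 2 := by
  have hex : ∃ k : ℕ, s < 2 ^ k := pow_unbounded_of_one_lt s one_lt_two
  classical
  refine ⟨Nat.find hex, Nat.find_spec hex, ?_⟩
  rcases hk : Nat.find hex with _ | k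
  · rw [pow_zero, le_add_iff_nonneg_right]; positivity
  · have hle : (2:ℝ) ^ k ≤ s := not_lt.1 (Nat.find_min hex (by omega))
    have : (4:ℝ) ^ (k + 1) = 4 * (2 ^ k) ^ 2 := by
      rw [← pow_mul, pow_succ, mul_comm k 2, pow_mul]; norm_num; ring
    rw [this]; nlinarith [pow_pos (two_pos : (0:ℝ) < 2) k]

theorem Real.mul_rpow_mul_mul_rpow_le {X Y t u v α β e : ℝ} (hX : 0 ≤ X) (hY : 0 ≤ Y)
    (ht : 1 ≤ t) (he : u * α + v * β ≤ e) :
    (X * t ^ u) ^ α * (Y * t ^ v) ^ β ≤ X ^ α * Y ^ β * t ^ e := by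
  have ht0 : 0 ≤ t := by linarith
  rw [Real.mul_rpow hX (by positivity), Real.mul_rpow hY (by positivity), ← Real.rpow_mul ht0,
    ← Real.rpow_mul ht0, mul_mul_mul_comm, ← Real.rpow_add (by linarith)]
  gcongr

namespace ENNReal

theorem rpow_mul_rpow_le_rpow_add (x : ℝ≥0∞) {s u : ℝ} (hs : 0 < s) :
    x ^ s * x ^ u ≤ x ^ (s + u) := by
  rcases eq_or_ne x 0 with rfl | h0
  · simp [ENNReal.zero_rpow_of_pos hs]
  rcases eq_or_ne x ⊤ with rfl | htop
  · rcases lt_trichotomy u 0 with hu | rfl | hu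
    · simp [ENNReal.top_rpow_of_neg hu]
    · simp
    · simp [ENNReal.top_rpow_of_pos hu, ENNReal.top_rpow_of_pos (add_pos hs hu)]
  · rw [ENNReal.rpow_add _ _ h0 htop]

theorem rpow_le_rpow_sub_one_mul {x M : ℝ≥0∞} (hx : x ≤ M) {s : ℝ} (hs : 1 ≤ s) :
    x ^ s ≤ M ^ (s - 1) * x := by
  rcases eq_or_ne x 0 with rfl | h0
  · simp [ENNReal.zero_rpow_of_pos (by linarith : (0:ℝ) < s)]
  rcases eq_or_ne x ⊤ with rfl | htop
  · rw [top_le_iff.1 hx, ENNReal.mul_top (by simp [ENNReal.rpow_eq_zero_iff, hs])]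
    exact le_top
  calc x ^ s = x ^ (s - 1) * x := by
        simpa using ENNReal.rpow_add (s - 1) 1 h0 htop
    _ ≤ M ^ (s - 1) * x := by gcongr

theorem ofReal_exp_rpow (u v : ℝ) :
    ENNReal.ofReal (exp u) ^ v = ENNReal.ofReal (exp (u * v)) := by
  rw [ENNReal.ofReal_rpow_of_pos (exp_pos u), Real.exp_mul]

theorem rpow_mul_ofReal_exp_mul_inv_rpow_le {G W : ℝ≥0∞} {p q γ s : ℝ} (hp : 0 < p)
    (hpq : p < q) (hW : ENNReal.ofReal (exp (-(γ * p / (8 * (q - p)) * (1 + 4 * s)))) ≤ W) :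
    (G ^ p * ENNReal.ofReal (exp (γ * p / (2 * q) * s))) ^ (q / p) * W⁻¹ ^ (q / p - 1) ≤
      ENNReal.ofReal (exp (γ / 8)) * (G ^ q * ENNReal.ofReal (exp (γ * s))) := by
  have hq : 0 < q := hp.trans hpq
  have hqp : 0 < q - p := by linarith
  have hgauss : (G ^ p * ENNReal.ofReal (exp (γ * p / (2 * q) * s))) ^ (q / p) =
      G ^ q * ENNReal.ofReal (exp (γ * s / 2)) := by
    rw [ENNReal.mul_rpow_of_nonneg _ _ (by positivity), ← ENNReal.rpow_mul, ofReal_exp_rpow,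
      mul_div_cancel₀ _ hp.ne']
    congr 3
    field_simp
  have hweight : W⁻¹ ^ (q / p - 1) ≤ ENNReal.ofReal (exp (γ / 8 + γ * s / 2)) := by
    calc W⁻¹ ^ (q / p - 1)
        ≤ (ENNReal.ofReal (exp (-(γ * p / (8 * (q - p)) * (1 + 4 * s)))))⁻¹ ^ (q / p - 1) := by
          gcongr
          rw [sub_nonneg, one_le_div hp]
          exact hpq.le
      _ = ENNReal.ofReal (exp (γ / 8 + γ * s / 2)) := by
          rw [← ENNReal.ofReal_inv_of_pos (exp_pos _), ← Real.exp_neg, neg_neg, ofReal_exp_rpow]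
          congr 2
          field_simp
          ring
  calc (G ^ p * ENNReal.ofReal (exp (γ * p / (2 * q) * s))) ^ (q / p) * W⁻¹ ^ (q / p - 1)
      ≤ G ^ q * ENNReal.ofReal (exp (γ * s / 2)) * ENNReal.ofReal (exp (γ / 8 + γ * s / 2)) := by
        rw [hgauss]; gcongr
    _ = ENNReal.ofReal (exp (γ / 8)) * (G ^ q * ENNReal.ofReal (exp (γ * s))) := by
        rw [mul_assoc, ← ENNReal.ofReal_mul (exp_pos _).le, ← Real.exp_add, mul_left_comm,
          ← ENNReal.ofReal_mul (exp_pos _).le, ← Real.exp_add]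
        ring_nf

theorem ofReal_mul_rpow_mul_ofReal_mul_rpow_le {A B p q : ℝ} (hA : 0 ≤ A) (hB : 0 ≤ B)
    (hp : 0 < p) (hpq : p < q) (V : ℝ≥0∞) :
    (ENNReal.ofReal A * V) ^ ((q - p) / q) * (ENNReal.ofReal B * V ^ (1 - q)) ^ (p / q) ≤
      ENNReal.ofReal (A ^ ((q - p) / q) * B ^ (p / q)) * V ^ (1 - p) := by
  have hq : 0 < q := hp.trans hpq
  have hexp : (q - p) / q + (1 - q) * (p / q) = 1 - p := by field_simp; ring
  rw [ENNReal.mul_rpow_of_nonneg _ _ (by positivity),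
    ENNReal.mul_rpow_of_nonneg _ _ (by positivity), ← ENNReal.rpow_mul,
    ENNReal.ofReal_mul (by positivity), ENNReal.ofReal_rpow_of_nonneg hA (by positivity),
    ENNReal.ofReal_rpow_of_nonneg hB (by positivity), mul_mul_mul_comm, ← hexp]
  gcongr
  exact V.rpow_mul_rpow_le_rpow_add (div_pos (by linarith) hq)

variable {α : Type*} [MeasurableSpace α] {μ : Measure α} {a b : ℝ}

theorem lintegral_mul_le_Lp_mul_Lq_of_aemeasurable_left (hab : a.HolderConjugate b)
    {f g : α → ℝ≥0∞} (hf : AEMeasurable f μ) (hf_top : ∀ᵐ x ∂μ, f x ≠ ∞) :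
    ∫⁻ x, f x * g x ∂μ ≤ (∫⁻ x, f x ^ a ∂μ) ^ (1 / a) * (∫⁻ x, g x ^ b ∂μ) ^ (1 / b) := by
  obtain ⟨φ, hφ, hφ_le, hφ_eq⟩ := exists_measurable_le_lintegral_eq μ fun x => f x * g x
  have hφ_le_mul : ∀ᵐ x ∂μ, φ x ≤ f x * (φ x / f x) := by
    filter_upwards [hf_top] with x hx
    rcases eq_or_ne (f x) 0 with h0 | h0
    · simpa [h0] using hφ_le x
    · rw [ENNReal.mul_div_cancel h0 hx]
  have hdiv_le : ∀ x, φ x / f x ≤ g x := fun x =>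
    ENNReal.div_le_of_le_mul ((hφ_le x).trans_eq (mul_comm _ _))
  calc ∫⁻ x, f x * g x ∂μ = ∫⁻ x, φ x ∂μ := hφ_eq
    _ ≤ ∫⁻ x, (f * fun x => φ x / f x) x ∂μ := lintegral_mono_ae hφ_le_mul
    _ ≤ (∫⁻ x, f x ^ a ∂μ) ^ (1 / a) * (∫⁻ x, (φ x / f x) ^ b ∂μ) ^ (1 / b) :=
      lintegral_mul_le_Lp_mul_Lq μ hab hf (hφ.aemeasurable.div hf)
    _ ≤ (∫⁻ x, f x ^ a ∂μ) ^ (1 / a) * (∫⁻ x, g x ^ b ∂μ) ^ (1 / b) := by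
      gcongr with x
      exacts [one_div_nonneg.2 hab.symm.nonneg, hab.symm.nonneg, hdiv_le x]

theorem lintegral_mul_le_weighted_Lp_mul_Lq (hab : a.HolderConjugate b)
    {f g w : α → ℝ≥0∞} (hf : AEMeasurable f μ) (hf_top : ∀ᵐ x ∂μ, f x ≠ ∞)
    (hw : AEMeasurable w μ) (hw0 : ∀ᵐ x ∂μ, w x ≠ 0) (hw_top : ∀ᵐ x ∂μ, w x ≠ ∞) :
    ∫⁻ x, f x * g x ∂μ ≤
      (∫⁻ x, f x ^ a * w x ∂μ) ^ (1 / a) * (∫⁻ x, g x ^ b * (w x)⁻¹ ^ (b - 1) ∂μ) ^ (1 / b) := by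
  have ha := hab.pos
  have hb := hab.symm.pos
  have hsplit : ∀ᵐ x ∂μ, f x * g x = (f x * w x ^ (1 / a)) * (g x * (w x)⁻¹ ^ (1 / a)) := by
    filter_upwards [hw0, hw_top] with x h0 htop
    rw [mul_mul_mul_comm, ← ENNReal.mul_rpow_of_nonneg _ _ (by positivity),
      ENNReal.mul_inv_cancel h0 htop, ENNReal.one_rpow, mul_one]
  have hleft : ∀ x, (f x * w x ^ (1 / a)) ^ a = f x ^ a * w x := fun x => by
    rw [ENNReal.mul_rpow_of_nonneg _ _ ha.le, ← ENNReal.rpow_mul, one_div_mul_cancel ha.ne',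
      ENNReal.rpow_one]
  have hright : ∀ x, (g x * (w x)⁻¹ ^ (1 / a)) ^ b = g x ^ b * (w x)⁻¹ ^ (b - 1) := fun x => by
    have hexp : 1 / a * b = b - 1 := by
      have := hab.symm.sub_one_mul_conj
      field_simp
      linarith
    rw [ENNReal.mul_rpow_of_nonneg _ _ hb.le, ← ENNReal.rpow_mul, hexp]
  have hfw_top : ∀ᵐ x ∂μ, f x * w x ^ (1 / a) ≠ ∞ := by
    filter_upwards [hf_top, hw_top] with x hfx hwx
    exact ENNReal.mul_ne_top hfx (ENNReal.rpow_ne_top_of_nonneg (by positivity) hwx)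
  calc ∫⁻ x, f x * g x ∂μ
      = ∫⁻ x, (f x * w x ^ (1 / a)) * (g x * (w x)⁻¹ ^ (1 / a)) ∂μ := lintegral_congr_ae hsplit
    _ ≤ _ := lintegral_mul_le_Lp_mul_Lq_of_aemeasurable_left hab (hf.mul (hw.pow_const _)) hfw_top
    _ = _ := by simp only [hleft, hright]

end ENNReal

theorem mul_holder_factors_le {A B p q ε t : ℝ} (hA : 0 ≤ A) (hB : 0 ≤ B) (hp : 0 < p)
    (hpq : p < q) (hε : 0 ≤ ε) (ht : 1 ≤ t) (V : ℝ≥0∞) :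
    (ENNReal.ofReal (A * √t ^ (-ε)) * V) ^ ((q - p) / q) *
        (ENNReal.ofReal (B * t ^ (-(q / 2))) * V ^ (1 - q)) ^ (p / q) ≤
      ENNReal.ofReal (A ^ ((q - p) / q) * B ^ (p / q) *
        t ^ (-(p / 2) - ε * ((q - p) / 2) / (2 * q))) * V ^ (1 - p) := by
  have hq : 0 < q := hp.trans hpq
  have hsqrt : √t ^ (-ε) = t ^ (-(ε / 2)) := by
    rw [Real.sqrt_eq_rpow, ← Real.rpow_mul (by linarith)]
    ring_nf
  grw [hsqrt, ENNReal.ofReal_mul_rpow_mul_ofReal_mul_rpow_le (by positivity) (by positivity) hp hpq]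
  gcongr ENNReal.ofReal ?_ * _
  refine Real.mul_rpow_mul_mul_rpow_le hA hB ht ?_
  have hexp : -(ε / 2) * ((q - p) / q) + -(q / 2) * (p / q) =
      -(p / 2) - ε * ((q - p) / 2) / (2 * q) - ε * (q - p) / (4 * q) := by
    field_simp
    ring
  have : 0 ≤ ε * (q - p) / (4 * q) := div_nonneg (mul_nonneg hε (by linarith)) (by positivity)
  linarith

theorem setLIntegral_le_mul_measure_of_inv_mul_le {α : Type*} [MeasurableSpace α]
    {μ : Measure α} {s : Set α} {f : α → ℝ≥0∞} {c : ℝ≥0∞} (hc : c ≠ 0)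
    (havg : (μ s)⁻¹ * ∫⁻ x in s, f x ∂μ ≤ c) : ∫⁻ x in s, f x ∂μ ≤ c * μ s := by
  rcases eq_or_ne (μ s) 0 with h0 | h0
  · simp [Measure.restrict_eq_zero.2 h0]
  rcases eq_or_ne (μ s) ⊤ with htop | htop
  · simp [htop, ENNReal.mul_top hc]
  rw [mul_comm]
  exact (ENNReal.inv_mul_le_iff h0 htop).1 havg

section Dyadic

variable {X : Type*} [MetricSpace X] [MeasurableSpace X] {μ : Measure X} {y : X} {r : ℝ}

variable (μ) in
def IsDoublingAt (C : ℝ) (y : X) : Prop :=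
  ∀ r, 0 < r → μ (ball y (2 * r)) ≤ ENNReal.ofReal C * μ (ball y r)

variable (μ) in
def HasBallAverageDecay (h : X → ℝ≥0∞) (y : X) (Ch ε : ℝ) : Prop :=
  ∀ r, 1 < r → (μ (ball y r))⁻¹ * ∫⁻ x in ball y r, h x ∂μ ≤ ENNReal.ofReal (Ch * r ^ (-ε))

theorem measure_ball_two_pow_mul_le {C : ℝ} (hdoub : IsDoublingAt μ C y) (hr : 0 < r) (k : ℕ) :
    μ (ball y (2 ^ k * r)) ≤ ENNReal.ofReal C ^ k * μ (ball y r) := by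
  induction k with
  | zero => simp
  | succ k ih =>
    calc μ (ball y (2 ^ (k + 1) * r)) = μ (ball y (2 * (2 ^ k * r))) := by ring_nf
      _ ≤ ENNReal.ofReal C * μ (ball y (2 ^ k * r)) := hdoub _ (by positivity)
      _ ≤ ENNReal.ofReal C ^ (k + 1) * μ (ball y r) := by
        rw [pow_succ', mul_assoc]; gcongr

theorem setLIntegral_ball_two_pow_mul_le {C Ch ε : ℝ} (hC : 0 ≤ C) (hCh : 0 < Ch)
    (hdoub : IsDoublingAt μ C y) {h : X → ℝ≥0∞} (hGD : HasBallAverageDecay μ h y Ch ε)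
    (hr : 1 < r) (k : ℕ) :
    ∫⁻ x in ball y (2 ^ k * r), h x ∂μ ≤
      ENNReal.ofReal (Ch * r ^ (-ε) * (2 ^ (-ε) * C) ^ k) * μ (ball y r) := by
  have hkr : 1 < 2 ^ k * r :=
    hr.trans_le (le_mul_of_one_le_left (by linarith) (one_le_pow₀ one_le_two))
  have hpow : ((2:ℝ) ^ k * r) ^ (-ε) = r ^ (-ε) * (2 ^ (-ε)) ^ k := by
    rw [Real.mul_rpow (by positivity) (by linarith), ← Real.rpow_natCast_mul zero_le_two,
      mul_comm (k : ℝ), Real.rpow_mul_natCast zero_le_two, mul_comm]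
  calc ∫⁻ x in ball y (2 ^ k * r), h x ∂μ
      ≤ ENNReal.ofReal (Ch * (2 ^ k * r) ^ (-ε)) * μ (ball y (2 ^ k * r)) :=
        setLIntegral_le_mul_measure_of_inv_mul_le (ENNReal.ofReal_pos.2 (by positivity)).ne' (hGD _ hkr)
    _ ≤ ENNReal.ofReal (Ch * (2 ^ k * r) ^ (-ε)) * (ENNReal.ofReal C ^ k * μ (ball y r)) := by
        gcongr; exact measure_ball_two_pow_mul_le hdoub (by linarith) k
    _ = ENNReal.ofReal (Ch * r ^ (-ε) * (2 ^ (-ε) * C) ^ k) * μ (ball y r) := by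
        rw [← mul_assoc, ← ENNReal.ofReal_pow hC, ← ENNReal.ofReal_mul (by positivity), hpow]
        ring_nf

variable (μ y r) in
/-- A measurable stand-in for the Gaussian `exp (-c d(x,y)² / r²)`, built from measurable hulls
of the dyadic balls: neither the balls nor `dist · y` need be measurable. -/
noncomputable def dyadicGaussianWeight (c : ℝ) (x : X) : ℝ≥0∞ :=
  ∑' k : ℕ, (toMeasurable μ (ball y (2 ^ k * r))).indicator
    (fun _ => ENNReal.ofReal (exp (-(c * 4 ^ k)))) x

theorem measurable_dyadicGaussianWeight (c : ℝ) : Measurable (dyadicGaussianWeight μ y r c) :=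
  Measurable.tsum fun _ => measurable_const.indicator (measurableSet_toMeasurable _ _)

theorem ofReal_exp_le_dyadicGaussianWeight (hr : 0 < r) {c : ℝ} (hc : 0 ≤ c) (x : X) :
    ENNReal.ofReal (exp (-(c * (1 + 4 * (dist x y / r) ^ 2)))) ≤
      dyadicGaussianWeight μ y r c x := by
  obtain ⟨k, hlt, hle⟩ :=
    exists_lt_two_pow_four_pow_le (div_nonneg (dist_nonneg (x := x) (y := y)) hr.le)
  have hx : x ∈ toMeasurable μ (ball y (2 ^ k * r)) :=
    subset_toMeasurable _ _ (mem_ball.2 ((div_lt_iff₀ hr).1 hlt))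
  refine le_trans ?_ (ENNReal.le_tsum k)
  rw [indicator_of_mem hx]
  gcongr

theorem dyadicGaussianWeight_ne_zero (hr : 0 < r) {c : ℝ} (hc : 0 ≤ c) (x : X) :
    dyadicGaussianWeight μ y r c x ≠ 0 :=
  ((ENNReal.ofReal_pos.2 (exp_pos _)).trans_le (ofReal_exp_le_dyadicGaussianWeight hr hc x)).ne'

theorem dyadicGaussianWeight_ne_top {c : ℝ} (hc : 0 < c) (x : X) :
    dyadicGaussianWeight μ y r c x ≠ ⊤ := by
  have hsum := summable_pow_mul_exp_neg_mul_four_pow one_pos hc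
  simp only [one_pow, one_mul] at hsum
  refine ne_top_of_le_ne_top ?_ (ENNReal.tsum_le_tsum fun k => indicator_le_self _ _ x)
  rw [← ENNReal.ofReal_tsum_of_nonneg (fun _ => (exp_pos _).le) hsum]
  exact ENNReal.ofReal_ne_top

theorem lintegral_mul_dyadicGaussianWeight_le {C Ch ε c : ℝ} (hC : 0 < C) (hCh : 0 < Ch)
    (hc : 0 < c) (hdoub : IsDoublingAt μ C y) {h : X → ℝ≥0∞} (hh : AEMeasurable h μ)
    (hGD : HasBallAverageDecay μ h y Ch ε) (hr : 1 < r) :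
    ∫⁻ x, h x * dyadicGaussianWeight μ y r c x ∂μ ≤
      ENNReal.ofReal (Ch * (∑' k : ℕ, (2 ^ (-ε) * C) ^ k * exp (-(c * 4 ^ k))) * r ^ (-ε)) *
        μ (ball y r) := by
  have hsum := summable_pow_mul_exp_neg_mul_four_pow (by positivity : 0 < 2 ^ (-ε) * C) hc
  have hS := tsum_pow_mul_exp_neg_mul_four_pow_pos (by positivity : 0 < 2 ^ (-ε) * C) hc
  rcases eq_or_ne (μ (ball y r)) ⊤ with htop | htop
  · rw [htop, ENNReal.mul_top (ENNReal.ofReal_pos.2 (by positivity)).ne']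
    exact le_top
  have hfin : ∀ k : ℕ, μ (ball y (2 ^ k * r)) ≠ ⊤ := fun k =>
    ne_top_of_le_ne_top (by finiteness) (measure_ball_two_pow_mul_le hdoub (by linarith) k)
  calc ∫⁻ x, h x * dyadicGaussianWeight μ y r c x ∂μ
      = ∑' k : ℕ, ENNReal.ofReal (exp (-(c * 4 ^ k))) * ∫⁻ x in ball y (2 ^ k * r), h x ∂μ := by
        have hmeas : ∀ k : ℕ, AEMeasurable (fun x => h x *
            (toMeasurable μ (ball y (2 ^ k * r))).indicator
              (fun _ => ENNReal.ofReal (exp (-(c * 4 ^ k)))) x) μ := fun k =>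
          hh.mul (measurable_const.indicator (measurableSet_toMeasurable _ _)).aemeasurable
        simp only [dyadicGaussianWeight, ← ENNReal.tsum_mul_left]
        rw [lintegral_tsum hmeas]
        refine tsum_congr fun k => ?_
        simp_rw [← indicator_mul_right]
        rw [lintegral_indicator (measurableSet_toMeasurable _ _),
          Measure.restrict_toMeasurable (hfin k), ← lintegral_const_mul' _ _ ENNReal.ofReal_ne_top]
        simp_rw [mul_comm]
    _ ≤ ∑' k : ℕ, ENNReal.ofReal (Ch * r ^ (-ε) * ((2 ^ (-ε) * C) ^ k * exp (-(c * 4 ^ k)))) *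
          μ (ball y r) := by
        refine ENNReal.tsum_le_tsum fun k => ?_
        calc ENNReal.ofReal (exp (-(c * 4 ^ k))) * ∫⁻ x in ball y (2 ^ k * r), h x ∂μ
            ≤ ENNReal.ofReal (exp (-(c * 4 ^ k))) *
                (ENNReal.ofReal (Ch * r ^ (-ε) * (2 ^ (-ε) * C) ^ k) * μ (ball y r)) := by
              gcongr; exact setLIntegral_ball_two_pow_mul_le hC.le hCh hdoub hGD hr k
          _ = _ := by
              rw [← mul_assoc, ← ENNReal.ofReal_mul (by positivity)]
              ring_nf
    _ = _ := by
        rw [ENNReal.tsum_mul_right, ← ENNReal.ofReal_tsum_of_nonneg (fun _ => by positivity)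
          (hsum.mul_left _), tsum_mul_left]
        ring_nf

theorem lintegral_rpow_mul_dyadicGaussianWeight_le {C Ch ε c M s : ℝ} (hC : 0 < C)
    (hCh : 0 < Ch) (hc : 0 < c) (hdoub : IsDoublingAt μ C y) {h : X → ℝ≥0∞}
    (hh : AEMeasurable h μ) (hM : 0 ≤ M) (hhM : ∀ x, h x ≤ ENNReal.ofReal M) (hs : 1 ≤ s)
    (hGD : HasBallAverageDecay μ h y Ch ε) (hr : 1 < r) :
    ∫⁻ x, h x ^ s * dyadicGaussianWeight μ y r c x ∂μ ≤
      ENNReal.ofReal (M ^ (s - 1) * (Ch * ∑' k : ℕ, (2 ^ (-ε) * C) ^ k * exp (-(c * 4 ^ k))) *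
        r ^ (-ε)) * μ (ball y r) := by
  calc ∫⁻ x, h x ^ s * dyadicGaussianWeight μ y r c x ∂μ
      ≤ ∫⁻ x, ENNReal.ofReal (M ^ (s - 1)) * (h x * dyadicGaussianWeight μ y r c x) ∂μ := by
        refine lintegral_mono fun x => ?_
        rw [← mul_assoc, ← ENNReal.ofReal_rpow_of_nonneg hM (by linarith)]
        gcongr
        exact ENNReal.rpow_le_rpow_sub_one_mul (hhM x) hs
    _ = ENNReal.ofReal (M ^ (s - 1)) * ∫⁻ x, h x * dyadicGaussianWeight μ y r c x ∂μ :=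
        lintegral_const_mul' _ _ ENNReal.ofReal_ne_top
    _ ≤ _ := by
        grw [lintegral_mul_dyadicGaussianWeight_le hC hCh hc hdoub hh hGD hr, ← mul_assoc,
          ← ENNReal.ofReal_mul (by positivity), mul_assoc (M ^ (s - 1))]

theorem lintegral_rpow_mul_inv_dyadicGaussianWeight_rpow_le {G : X → ℝ≥0∞} {p q γ t : ℝ}
    {B : ℝ≥0∞} (hp : 0 < p) (hpq : p < q) (hγ : 0 ≤ γ) (ht : 0 < t)
    (hG : ∫⁻ x, G x ^ q * ENNReal.ofReal (exp (γ * dist x y ^ 2 / t)) ∂μ ≤ B) :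
    ∫⁻ x, (G x ^ p * ENNReal.ofReal (exp (γ * p / (2 * q) * (dist x y ^ 2 / t)))) ^ (q / p) *
        (dyadicGaussianWeight μ y √t (γ * p / (8 * (q - p))) x)⁻¹ ^ (q / p - 1) ∂μ ≤
      ENNReal.ofReal (exp (γ / 8)) * B := by
  have hw : ∀ x, ENNReal.ofReal (exp (-(γ * p / (8 * (q - p)) * (1 + 4 * (dist x y ^ 2 / t))))) ≤
      dyadicGaussianWeight μ y √t (γ * p / (8 * (q - p))) x := fun x => by
    have := ofReal_exp_le_dyadicGaussianWeight (μ := μ) (y := y) (Real.sqrt_pos.2 ht)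
      (div_nonneg (by positivity) (by linarith) : 0 ≤ γ * p / (8 * (q - p))) x
    rwa [div_pow, Real.sq_sqrt ht.le] at this
  calc _ ≤ ∫⁻ x, ENNReal.ofReal (exp (γ / 8)) *
          (G x ^ q * ENNReal.ofReal (exp (γ * (dist x y ^ 2 / t)))) ∂μ :=
        lintegral_mono fun x => ENNReal.rpow_mul_ofReal_exp_mul_inv_rpow_le hp hpq (hw x)
    _ = ENNReal.ofReal (exp (γ / 8)) *
          ∫⁻ x, G x ^ q * ENNReal.ofReal (exp (γ * (dist x y ^ 2 / t))) ∂μ :=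
        lintegral_const_mul' _ _ ENNReal.ofReal_ne_top
    _ ≤ ENNReal.ofReal (exp (γ / 8)) * B := by
        simp only [← mul_div_assoc]
        gcongr

end Dyadic

/-- If the weighted gradient heat kernel bound `(GLY_q)` holds for some `q > p`, and the
bounded function `h ≥ 0` satisfies the average decay `⨍_{B(y,r)} h dμ ≤ C r^{-ε}` for
`r > 1`, then with `δ = (q-p)/2` there are `C', γ' > 0` such that for `t > 1`:
`∫ h(x)^p |∇_x p_t(x,y)|^p e^{γ' d(x,y)²/t} dμ(x) ≤ C' t^{-p/2 - εδ/(2q)} V(y,√t)^{1-p}`. -/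
theorem weighted_gradient_kernel_decay {X : Type*} [MetricSpace X] [MeasurableSpace X]
    (μ : Measure X) (C_D : ℝ) (hCD : 1 ≤ C_D)
    (hdoub : ∀ (x : X) (r : ℝ), 0 < r →
      μ (ball x (2 * r)) ≤ ENNReal.ofReal C_D * μ (ball x r))
    (g : ℝ → X → X → ℝ≥0∞) -- `g t x y` represents `|∇_x p_t(x,y)|`
    (p q γ CGLY : ℝ) (hp : 2 < p) (hpq : p < q) (hγ : 0 < γ) (hCGLY : 0 < CGLY)
    (hGLY : ∀ (t : ℝ) (y : X), 0 < t →
      ∫⁻ x, g t x y ^ q * ENNReal.ofReal (Real.exp (γ * (dist x y) ^ 2 / t)) ∂μ ≤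
        ENNReal.ofReal (CGLY * t ^ (-(q / 2))) * μ (ball y (Real.sqrt t)) ^ ((1:ℝ) - q))
    (h : X → ℝ≥0∞) (hmeas : Measurable h) (K : ℝ) (hbdd : ∀ x, h x ≤ ENNReal.ofReal K)
    (ε Ch : ℝ) (hε : 0 < ε) (hCh : 0 < Ch)
    (hGD : ∀ (y : X) (r : ℝ), 1 < r →
      (μ (ball y r))⁻¹ * ∫⁻ x in ball y r, h x ∂μ ≤ ENNReal.ofReal (Ch * r ^ (-ε))) :
    ∃ C' γ' : ℝ, 0 < C' ∧ 0 < γ' ∧ ∀ (t : ℝ) (y : X), 1 < t →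
      ∫⁻ x, h x ^ p * g t x y ^ p *
          ENNReal.ofReal (Real.exp (γ' * (dist x y) ^ 2 / t)) ∂μ ≤
        ENNReal.ofReal (C' * t ^ (-(p / 2) - ε * ((q - p) / 2) / (2 * q))) *
          μ (ball y (Real.sqrt t)) ^ ((1:ℝ) - p) := by
  have hp0 : 0 < p := by linarith
  have hq : 0 < q := by linarith
  have hqp : 0 < q - p := by linarith
  have hab : (q / (q - p)).HolderConjugate (q / p) :=
    ((Real.holderConjugate_iff_eq_conjExponent ((one_lt_div hp0).2 hpq)).2 (by field_simp)).symm
  set c := γ * p / (8 * (q - p))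
  have hc : 0 < c := div_pos (by positivity) (by linarith)
  set S := ∑' k : ℕ, (2 ^ (-ε) * C_D) ^ k * exp (-(c * 4 ^ k))
  have hS : 0 < S :=
    tsum_pow_mul_exp_neg_mul_four_pow_pos (mul_pos (by positivity) (by linarith)) hc
  set K' := max K 1
  have hK' : 0 < K' := lt_max_of_lt_right one_pos
  have hK'_pow := Real.rpow_pos_of_pos hK' (p * (q / (q - p)) - 1)
  refine ⟨(K' ^ (p * (q / (q - p)) - 1) * (Ch * S)) ^ ((q - p) / q) *
    (exp (γ / 8) * CGLY) ^ (p / q), γ * p / (2 * q), by positivity, by positivity,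
    fun t y ht => ?_⟩
  have hr : 1 < √t := by simpa using Real.sqrt_lt_sqrt zero_le_one ht
  calc ∫⁻ x, h x ^ p * g t x y ^ p * ENNReal.ofReal (exp (γ * p / (2 * q) * dist x y ^ 2 / t)) ∂μ
      = ∫⁻ x, h x ^ p * (g t x y ^ p *
          ENNReal.ofReal (exp (γ * p / (2 * q) * (dist x y ^ 2 / t)))) ∂μ := by
        simp_rw [mul_assoc, mul_div_assoc]
    _ ≤ (∫⁻ x, h x ^ (p * (q / (q - p))) * dyadicGaussianWeight μ y √t c x ∂μ) ^ ((q - p) / q) *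
        (∫⁻ x, (g t x y ^ p * ENNReal.ofReal (exp (γ * p / (2 * q) * (dist x y ^ 2 / t))))
          ^ (q / p) * (dyadicGaussianWeight μ y √t c x)⁻¹ ^ (q / p - 1) ∂μ) ^ (p / q) := by
        simpa only [← ENNReal.rpow_mul, one_div_div] using
          ENNReal.lintegral_mul_le_weighted_Lp_mul_Lq hab (hmeas.pow_const p).aemeasurable
            (ae_of_all _ fun x => ENNReal.rpow_ne_top_of_nonneg hp0.le
              (ne_top_of_le_ne_top ENNReal.ofReal_ne_top (hbdd x)))
            (measurable_dyadicGaussianWeight c).aemeasurable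
            (ae_of_all _ (dyadicGaussianWeight_ne_zero (by linarith) hc.le))
            (ae_of_all _ (dyadicGaussianWeight_ne_top hc))
    _ ≤ (ENNReal.ofReal (K' ^ (p * (q / (q - p)) - 1) * (Ch * S) * √t ^ (-ε)) *
          μ (ball y √t)) ^ ((q - p) / q) *
        (ENNReal.ofReal (exp (γ / 8) * CGLY * t ^ (-(q / 2))) * μ (ball y √t) ^ (1 - q))
          ^ (p / q) := by
        have hpa : 1 ≤ p * (q / (q - p)) := by
          rw [← mul_div_assoc, le_div_iff₀ hqp]
          nlinarith
        have hα : 0 ≤ (q - p) / q := div_nonneg hqp.le hq.le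
        gcongr
        · exact lintegral_rpow_mul_dyadicGaussianWeight_le (by linarith) hCh hc (hdoub y)
            hmeas.aemeasurable hK'.le (fun x => (hbdd x).trans (by gcongr; exact le_max_left _ _))
            hpa (hGD y) hr
        · grw [lintegral_rpow_mul_inv_dyadicGaussianWeight_rpow_le hp0 hpq hγ.le (by linarith)
            (hGLY t y (by linarith)), ← mul_assoc, ← ENNReal.ofReal_mul (exp_pos _).le,
            mul_assoc (exp _)]
    _ ≤ _ := mul_holder_factors_le (by positivity) (by positivity) hp0 hpq hε.le ht.le _
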